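/- arXiv:1003.1218 — 3 statements merged into one kernel-verified Lean document; each statement's English description precedes it below -/
import Mathlib

section
/- Let u be a nontrivial solution of τ_φ u = z u on I with z ∈ ℝ (so u is nowhere zero), fix x₀ ∈ I, and let φ̂(x) = φ(x) − (tr φ(x)/2)·𝟙 denote the trace-free part of φ(x). Define v(x) = (2 ∫_{x₀}^x ⟨u(r), φ̂(r) u(r)⟩ / |u(r)|⁴ dr)·u(x) + J·u(x)/|u(x)|². Then v is a solution of τ_φ v = z v on I and W_x(u, v) = 1 for every x ∈ I. -/
open MeasureTheory Real Set

/-- The real matrix representing `(1/i)·σ₂`. -/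
noncomputable def Jmat : Matrix (Fin 2) (Fin 2) ℝ := !![0, -1; 1, 0]

/-- The Wronskian `W_x(u,v) = u₁(x) v₂(x) − u₂(x) v₁(x)`. -/
noncomputable def Wr (u v : ℝ → Fin 2 → ℝ) (x : ℝ) : ℝ :=
  u x 0 * v x 1 - u x 1 * v x 0

/-- The Euclidean inner product on `ℝ²`. -/
noncomputable def ip (a b : Fin 2 → ℝ) : ℝ := a 0 * b 0 + a 1 * b 1

/-- `u` is locally absolutely continuous on `I` with a.e. derivative `u'`. -/
def IsACDeriv (I : Set ℝ) (u u' : ℝ → Fin 2 → ℝ) : Prop :=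
  ContinuousOn u I ∧
  ∀ c ∈ I, ∀ x ∈ I, ∀ i : Fin 2,
    IntervalIntegrable (fun t => u' t i) volume c x ∧
    u x i = u c i + ∫ t in c..x, u' t i

/-- `u` is a solution of the Dirac equation `τ_φ u = λ u` on `I`. -/
def IsDiracSolution (I : Set ℝ) (φ : ℝ → Matrix (Fin 2) (Fin 2) ℝ) (lam : ℝ)
    (u : ℝ → Fin 2 → ℝ) : Prop :=
  ∃ u' : ℝ → Fin 2 → ℝ, IsACDeriv I u u' ∧
    ∀ᵐ x ∂volume, x ∈ I → Jmat.mulVec (u' x) + (φ x).mulVec (u x) = lam • u x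

/-- The trace-free part `φ̂(x) = φ(x) − (tr φ(x)/2)·𝟙` of the potential. -/
noncomputable def traceFree (φ : ℝ → Matrix (Fin 2) (Fin 2) ℝ) (x : ℝ) :
    Matrix (Fin 2) (Fin 2) ℝ :=
  φ x - (Matrix.trace (φ x) / 2) • (1 : Matrix (Fin 2) (Fin 2) ℝ)

/-!
By `J² = -1` the equation reads `u' = J (φ - z) u`. The Wronskian of `u` with `J u / |u|²` is `1`,
and adding `G u` does not change it. Differentiating `v = G u + J u / |u|²` shows that
`v' = J (φ - z) v` amounts to `G' u + (|u|⁻²)' J u = 2 |u|⁻² φ̂ u`, since `B + J B J = 2 B̂` for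
symmetric `B`. Expanding `φ̂ u` in the orthogonal basis `u, J u` (where `|J u| = |u|`) gives exactly
`G' = 2 ⟨u, φ̂ u⟩ / |u|⁴` and `(|u|⁻²)' = 2 ⟨J u, φ̂ u⟩ / |u|⁴`.

For the regularity, `v` is built from absolutely continuous functions by sums, products and the
inverse of the nonvanishing `|u|²`, so it is absolutely continuous; the fundamental theorem of
calculus for absolutely continuous functions turns the a.e. pointwise computation into the integral
form of the equation.
-/

namespace AbsolutelyContinuousOnInterval

variable {X Y : Type*} [PseudoMetricSpace X] [PseudoMetricSpace Y] {a b : ℝ}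

theorem of_dist_le_mul {f : ℝ → X} {g : ℝ → Y} (K : ℝ) (hf : AbsolutelyContinuousOnInterval f a b)
    (h : ∀ x ∈ uIcc a b, ∀ y ∈ uIcc a b, dist (g x) (g y) ≤ K * dist (f x) (f y)) :
    AbsolutelyContinuousOnInterval g a b := by
  have hK : Filter.Tendsto _ _ (nhds (K * 0)) := Filter.Tendsto.const_mul K hf
  rw [mul_zero] at hK
  refine squeeze_zero' (.of_forall fun _ => Finset.sum_nonneg fun _ _ => dist_nonneg) ?_ hK
  rw [Filter.eventually_inf_principal]
  filter_upwards with E hE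
  rw [Finset.mul_sum]
  exact Finset.sum_le_sum fun i hi => h _ (hE.1 i hi).1 _ (hE.1 i hi).2

theorem congr {f g : ℝ → X} (hf : AbsolutelyContinuousOnInterval f a b)
    (h : EqOn f g (uIcc a b)) : AbsolutelyContinuousOnInterval g a b :=
  hf.of_dist_le_mul 1 fun x hx y hy => by rw [h hx, h hy, one_mul]

theorem inv₀ {f : ℝ → ℝ} (hf : AbsolutelyContinuousOnInterval f a b)
    (h0 : ∀ x ∈ uIcc a b, f x ≠ 0) : AbsolutelyContinuousOnInterval (fun x => (f x)⁻¹) a b := by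
  obtain ⟨m, hm, hmin⟩ := isCompact_uIcc.exists_isMinOn nonempty_uIcc hf.continuousOn.abs
  have hpos : 0 < |f m| := abs_pos.2 (h0 m hm)
  refine hf.of_dist_le_mul (|f m| ^ 2)⁻¹ fun x hx y hy => ?_
  have hx' : |f m| ≤ |f x| := hmin hx
  have hy' : |f m| ≤ |f y| := hmin hy
  rw [Real.dist_eq, Real.dist_eq, inv_sub_inv (h0 x hx) (h0 y hy), abs_div, abs_mul,
    div_eq_inv_mul, abs_sub_comm]
  gcongr
  rw [sq]
  exact mul_le_mul hx' hy' hpos.le (abs_nonneg _)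

end AbsolutelyContinuousOnInterval

def IsPrimitiveOn (I : Set ℝ) (f f' : ℝ → ℝ) : Prop :=
  ∀ c ∈ I, ∀ x ∈ I, IntervalIntegrable f' volume c x ∧ f x = f c + ∫ t in c..x, f' t

namespace IsPrimitiveOn

variable {I : Set ℝ} {f f' : ℝ → ℝ}

theorem absolutelyContinuousOnInterval (hI : I.OrdConnected) (hf : IsPrimitiveOn I f f')
    {c x : ℝ} (hc : c ∈ I) (hx : x ∈ I) : AbsolutelyContinuousOnInterval f c x := by
  refine ((hf c hc x hx).1.absolutelyContinuousOnInterval_intervalIntegral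
    left_mem_uIcc).of_dist_le_mul 1 fun y hy t ht => ?_
  rw [(hf c hc y (hI.uIcc_subset hc hx hy)).2, (hf c hc t (hI.uIcc_subset hc hx ht)).2,
    dist_add_left, one_mul]

theorem ae_hasDerivAt (hI : I.OrdConnected) (hf : IsPrimitiveOn I f f')
    {c x : ℝ} (hc : c ∈ I) (hx : x ∈ I) : ∀ᵐ t, t ∈ Ioo c x → HasDerivAt f (f' t) t := by
  filter_upwards [(hf c hc x hx).1.ae_hasDerivAt_integral] with t hderiv ht
  have hloc : (fun y => f c + ∫ s in c..y, f' s) =ᶠ[nhds t] f := by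
    filter_upwards [Ioo_mem_nhds ht.1 ht.2] with y hy
    exact ((hf c hc y (hI.out hc hx (Ioo_subset_Icc_self hy))).2).symm
  exact ((hderiv (Ioo_subset_Icc_self.trans Icc_subset_uIcc ht) c left_mem_uIcc).const_add
    (f c)).congr_of_eventuallyEq hloc.symm

theorem const_mul (hf : IsPrimitiveOn I f f') (r : ℝ) :
    IsPrimitiveOn I (fun x => r * f x) (fun x => r * f' x) := fun c hc x hx =>
  ⟨(hf c hc x hx).1.const_mul r, by
    simp only [intervalIntegral.integral_const_mul, (hf c hc x hx).2, mul_add]⟩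

theorem of_ae_hasDerivAt
    (hac : ∀ c ∈ I, ∀ x ∈ I, AbsolutelyContinuousOnInterval f c x)
    (hderiv : ∀ c ∈ I, ∀ x ∈ I, ∀ᵐ t, t ∈ Ioo c x → HasDerivAt f (f' t) t) :
    IsPrimitiveOn I f f' := by
  intro c hc x hx
  have hmin : min c x ∈ I := min_rec' (· ∈ I) hc hx
  have hmax : max c x ∈ I := max_rec' (· ∈ I) hc hx
  have hae : ∀ᵐ t ∂volume.restrict (uIoc c x), deriv f t = f' t := by
    rw [ae_restrict_iff' measurableSet_uIoc]
    have hne : ∀ᵐ t, t ≠ max c x := by simp [ae_iff, measure_singleton]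
    filter_upwards [hderiv _ hmin _ hmax, hne] with t ht hne hmem
    exact (ht ⟨hmem.1, lt_of_le_of_ne hmem.2 hne⟩).deriv
  have hac := hac c hc x hx
  refine ⟨hac.intervalIntegrable_deriv.congr_ae hae, ?_⟩
  rw [← intervalIntegral.integral_congr_ae_restrict hae, hac.integral_deriv_eq_sub]
  ring

end IsPrimitiveOn

theorem isPrimitiveOn_integral {I : Set ℝ} {g : ℝ → ℝ} {x₀ : ℝ} (hx₀ : x₀ ∈ I)
    (hg : ∀ c ∈ I, ∀ x ∈ I, IntervalIntegrable g volume c x) :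
    IsPrimitiveOn I (fun x => ∫ t in x₀..x, g t) g := fun c hc x hx =>
  ⟨hg c hc x hx, (intervalIntegral.integral_add_adjacent_intervals (hg x₀ hx₀ c hc)
    (hg c hc x hx)).symm⟩

theorem continuousOn_of_absolutelyContinuousOnInterval {F : Type*} [SeminormedAddCommGroup F]
    {I : Set ℝ} (hI : IsOpen I) {f : ℝ → F}
    (hf : ∀ c ∈ I, ∀ x ∈ I, AbsolutelyContinuousOnInterval f c x) : ContinuousOn f I := by
  intro t ht
  obtain ⟨l, r, ⟨hlt, htr⟩, hsub⟩ := mem_nhds_iff_exists_Ioo_subset.1 (hI.mem_nhds ht)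
  obtain ⟨c, hlc, hct⟩ := exists_between hlt
  obtain ⟨x, htx, hxr⟩ := exists_between htr
  have hcont := (hf c (hsub ⟨hlc, hct.trans htr⟩) x (hsub ⟨hlt.trans htx, hxr⟩)).continuousOn
  rw [uIcc_of_le (hct.trans htx).le] at hcont
  exact (hcont.continuousAt (Icc_mem_nhds hct htx)).continuousWithinAt

theorem isACDeriv_iff {I : Set ℝ} (hIo : IsOpen I) (hIc : I.OrdConnected)
    {u u' : ℝ → Fin 2 → ℝ} :
    IsACDeriv I u u' ↔ ∀ i, IsPrimitiveOn I (fun x => u x i) (fun x => u' x i) := by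
  refine ⟨fun hu i c hc x hx => hu.2 c hc x hx i, fun hu => ⟨?_, fun c hc x hx i => hu i c hc x hx⟩⟩
  exact continuousOn_pi.2 fun i => continuousOn_of_absolutelyContinuousOnInterval hIo
    fun c hc x hx => (hu i).absolutelyContinuousOnInterval hIc hc hx

open Matrix

theorem Jmat_mulVec_Jmat_mulVec (w : Fin 2 → ℝ) : Jmat *ᵥ (Jmat *ᵥ w) = -w := by
  ext i; fin_cases i <;> simp [Jmat, mulVec, dotProduct]

theorem ip_self_ne_zero {a : Fin 2 → ℝ} (ha : a ≠ 0) : ip a a ≠ 0 := by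
  rwa [show ip a a = a ⬝ᵥ a by simp [ip, dotProduct], Ne, dotProduct_self_eq_zero]

noncomputable def reductionOfOrder (G : ℝ → ℝ) (u : ℝ → Fin 2 → ℝ) (x : ℝ) : Fin 2 → ℝ :=
  G x • u x + (ip (u x) (u x))⁻¹ • Jmat.mulVec (u x)

theorem reductionOfOrder_apply_zero (G : ℝ → ℝ) (u : ℝ → Fin 2 → ℝ) (x : ℝ) :
    reductionOfOrder G u x 0 = G x * u x 0 + (ip (u x) (u x))⁻¹ * -u x 1 := by
  simp [reductionOfOrder, Jmat, dotProduct]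

theorem reductionOfOrder_apply_one (G : ℝ → ℝ) (u : ℝ → Fin 2 → ℝ) (x : ℝ) :
    reductionOfOrder G u x 1 = G x * u x 1 + (ip (u x) (u x))⁻¹ * u x 0 := by
  simp [reductionOfOrder, Jmat, dotProduct]

theorem wr_reductionOfOrder (G : ℝ → ℝ) {u : ℝ → Fin 2 → ℝ} {x : ℝ} (hu : u x ≠ 0) :
    Wr u (reductionOfOrder G u) x = 1 := by
  have hρ := ip_self_ne_zero hu
  rw [Wr, reductionOfOrder_apply_zero, reductionOfOrder_apply_one]
  field_simp
  simp only [ip]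
  ring

theorem hasDerivAt_reductionOfOrder {A : Matrix (Fin 2) (Fin 2) ℝ} (hA : A.IsSymm) {z t : ℝ}
    {G : ℝ → ℝ} {u : ℝ → Fin 2 → ℝ} (hut : u t ≠ 0)
    (hu : HasDerivAt u (Jmat *ᵥ (A *ᵥ u t - z • u t)) t)
    (hG : HasDerivAt G (2 * (ip (u t) ((A - (A.trace / 2) • 1) *ᵥ u t) / ip (u t) (u t) ^ 2)) t) :
    HasDerivAt (reductionOfOrder G u)
      (Jmat *ᵥ (A *ᵥ reductionOfOrder G u t - z • reductionOfOrder G u t)) t := by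
  have hsymm : A 1 0 = A 0 1 := hA.apply 0 1
  have hρt := ip_self_ne_zero hut
  have hρt' : u t 0 ^ 2 + u t 1 ^ 2 ≠ 0 := by simpa [ip, ← sq] using hρt
  have hu0 := hasDerivAt_pi.1 hu 0
  have hu1 := hasDerivAt_pi.1 hu 1
  have hρinv := ((hu0.mul hu0).add (hu1.mul hu1)).inv hρt
  have h0 : HasDerivAt (fun s => reductionOfOrder G u s 0) _ t :=
    ((hG.mul hu0).add (hρinv.mul hu1.neg)).congr_of_eventuallyEq
      (.of_forall fun s => reductionOfOrder_apply_zero G u s)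
  have h1 : HasDerivAt (fun s => reductionOfOrder G u s 1) _ t :=
    ((hG.mul hu1).add (hρinv.mul hu0)).congr_of_eventuallyEq
      (.of_forall fun s => reductionOfOrder_apply_one G u s)
  refine hasDerivAt_pi.2 (Fin.forall_fin_two.2 ⟨h0.congr_deriv ?_, h1.congr_deriv ?_⟩) <;>
  simp only [Jmat, one_fin_two, mulVec_fin_two, trace_fin_two, of_apply, cons_val', cons_val_zero,
    cons_val_one, cons_val_fin_one, reductionOfOrder_apply_zero, reductionOfOrder_apply_one, ip,
    hsymm, Pi.add_apply, Pi.sub_apply, Pi.smul_apply, Pi.mul_apply, Pi.neg_apply, Pi.inv_apply,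
    Matrix.sub_apply, Matrix.smul_apply, smul_eq_mul] <;>
  field_simp <;>
  ring

theorem eq_Jmat_mulVec_of_Jmat_mulVec_add_mulVec_eq {A : Matrix (Fin 2) (Fin 2) ℝ} {z : ℝ}
    {w w' : Fin 2 → ℝ} (h : Jmat *ᵥ w' + A *ᵥ w = z • w) : w' = Jmat *ᵥ (A *ᵥ w - z • w) := by
  rw [← h, sub_add_cancel_right, mulVec_neg, Jmat_mulVec_Jmat_mulVec, neg_neg]

theorem Jmat_mulVec_add_mulVec_eq (A : Matrix (Fin 2) (Fin 2) ℝ) (z : ℝ) (w : Fin 2 → ℝ) :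
    Jmat *ᵥ (Jmat *ᵥ (A *ᵥ w - z • w)) + A *ᵥ w = z • w := by
  rw [Jmat_mulVec_Jmat_mulVec, neg_sub, sub_add_cancel]

theorem absolutelyContinuousOnInterval_reductionOfOrder_apply {G : ℝ → ℝ} {u : ℝ → Fin 2 → ℝ}
    {a b : ℝ} (hG : AbsolutelyContinuousOnInterval G a b)
    (hu : ∀ i, AbsolutelyContinuousOnInterval (fun x => u x i) a b)
    (hu0 : ∀ x ∈ uIcc a b, u x ≠ 0) :
    ∀ i, AbsolutelyContinuousOnInterval (fun x => reductionOfOrder G u x i) a b := by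
  have hρinv : AbsolutelyContinuousOnInterval (fun x => (ip (u x) (u x))⁻¹) a b :=
    (((hu 0).fun_mul (hu 0)).fun_add ((hu 1).fun_mul (hu 1))).inv₀ fun x hx =>
      ip_self_ne_zero (hu0 x hx)
  simp only [Fin.forall_fin_two, reductionOfOrder_apply_zero, reductionOfOrder_apply_one]
  exact ⟨(hG.fun_mul (hu 0)).fun_add (hρinv.fun_mul (hu 1).fun_neg),
    (hG.fun_mul (hu 1)).fun_add (hρinv.fun_mul (hu 0))⟩

theorem intervalIntegrable_ip_mulVec {M : ℝ → Matrix (Fin 2) (Fin 2) ℝ} {w : ℝ → Fin 2 → ℝ}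
    {a b : ℝ} (hM : ∀ i j, IntervalIntegrable (fun r => M r i j) volume a b)
    (hw : ContinuousOn w (uIcc a b)) :
    IntervalIntegrable (fun r => ip (w r) (M r *ᵥ w r)) volume a b := by
  have hwi : ∀ i, ContinuousOn (fun r => w r i) (uIcc a b) := continuousOn_pi.1 hw
  simp only [ip, mulVec, dotProduct, Fin.sum_univ_two]
  exact ((((hM 0 0).mul_continuousOn (hwi 0)).add ((hM 0 1).mul_continuousOn (hwi 1))).continuousOn_mul
    (hwi 0)).add ((((hM 1 0).mul_continuousOn (hwi 0)).add
      ((hM 1 1).mul_continuousOn (hwi 1))).continuousOn_mul (hwi 1))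

theorem intervalIntegrable_traceFree_apply {φ : ℝ → Matrix (Fin 2) (Fin 2) ℝ} {a b : ℝ}
    (hφ : ∀ i j, IntervalIntegrable (fun r => φ r i j) volume a b) (i j : Fin 2) :
    IntervalIntegrable (fun r => traceFree φ r i j) volume a b := by
  simp only [traceFree, Matrix.sub_apply, Matrix.smul_apply, trace_fin_two, smul_eq_mul]
  exact (hφ i j).sub ((((hφ 0 0).add (hφ 1 1)).div_const 2).mul_const _)

theorem intervalIntegrable_ip_traceFree_mulVec_div {I : Set ℝ} (hI : I.OrdConnected)
    {φ : ℝ → Matrix (Fin 2) (Fin 2) ℝ} (hφ : ∀ i j, LocallyIntegrableOn (fun x => φ x i j) I volume)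
    {u : ℝ → Fin 2 → ℝ} (hu : ContinuousOn u I) (hu0 : ∀ x ∈ I, u x ≠ 0)
    {c x : ℝ} (hc : c ∈ I) (hx : x ∈ I) :
    IntervalIntegrable (fun r => ip (u r) (traceFree φ r *ᵥ u r) / ip (u r) (u r) ^ 2) volume c x := by
  have hsub := hI.uIcc_subset hc hx
  have hφ' : ∀ i j, IntervalIntegrable (fun r => φ r i j) volume c x := fun i j =>
    ((hφ i j).integrableOn_compact_subset hsub isCompact_uIcc).intervalIntegrable
  have hui := continuousOn_pi.1 (hu.mono hsub)
  have hρ : ContinuousOn (fun r => (ip (u r) (u r) ^ 2)⁻¹) (uIcc c x) :=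
    ((((hui 0).mul (hui 0)).add ((hui 1).mul (hui 1))).pow 2).inv₀ fun r hr =>
      pow_ne_zero 2 (ip_self_ne_zero (hu0 r (hsub hr)))
  simpa only [div_eq_mul_inv] using
    (intervalIntegrable_ip_mulVec (intervalIntegrable_traceFree_apply hφ')
      (hu.mono hsub)).mul_continuousOn hρ

theorem isDiracSolution_of_eqOn_reductionOfOrder {I : Set ℝ} (hIo : IsOpen I)
    (hIc : I.OrdConnected) {φ : ℝ → Matrix (Fin 2) (Fin 2) ℝ} (hs : ∀ x ∈ I, (φ x).IsSymm)
    {z : ℝ} {u : ℝ → Fin 2 → ℝ} (hu : IsDiracSolution I φ z u) (hu0 : ∀ x ∈ I, u x ≠ 0)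
    {G : ℝ → ℝ}
    (hG : IsPrimitiveOn I G fun r => 2 * (ip (u r) (traceFree φ r *ᵥ u r) / ip (u r) (u r) ^ 2))
    {v : ℝ → Fin 2 → ℝ} (hv : EqOn v (reductionOfOrder G u) I) : IsDiracSolution I φ z v := by
  obtain ⟨u', hu', hode⟩ := hu
  rw [isACDeriv_iff hIo hIc] at hu'
  refine ⟨fun x => Jmat *ᵥ (φ x *ᵥ v x - z • v x), (isACDeriv_iff hIo hIc).2 fun i => ?_,
    .of_forall fun x _ => Jmat_mulVec_add_mulVec_eq _ _ _⟩
  refine IsPrimitiveOn.of_ae_hasDerivAt (fun c hc x hx => ?_) (fun c hc x hx => ?_)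
  · refine AbsolutelyContinuousOnInterval.congr ?_
      fun t ht => congrFun (hv (hIc.uIcc_subset hc hx ht)).symm i
    exact absolutelyContinuousOnInterval_reductionOfOrder_apply
      (hG.absolutelyContinuousOnInterval hIc hc hx)
      (fun j => (hu' j).absolutelyContinuousOnInterval hIc hc hx)
      (fun t ht => hu0 t (hIc.uIcc_subset hc hx ht)) i
  · filter_upwards [hode, (hu' 0).ae_hasDerivAt hIc hc hx, (hu' 1).ae_hasDerivAt hIc hc hx,
      hG.ae_hasDerivAt hIc hc hx] with t hodet hu0t hu1t hGt ht
    have htI : t ∈ I := hIc.out hc hx (Ioo_subset_Icc_self ht)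
    have hut : HasDerivAt u (Jmat *ᵥ (φ t *ᵥ u t - z • u t)) t := by
      rw [← eq_Jmat_mulVec_of_Jmat_mulVec_add_mulVec_eq (hodet htI)]
      exact hasDerivAt_pi.2 (Fin.forall_fin_two.2 ⟨hu0t ht, hu1t ht⟩)
    have hvt := hasDerivAt_reductionOfOrder (hs t htI) (hu0 t htI) hut (hGt ht)
    have hev : reductionOfOrder G u =ᶠ[nhds t] v :=
      Filter.eventually_of_mem (hIo.mem_nhds htI) fun s hs => (hv hs).symm
    rw [hv htI]
    exact hasDerivAt_pi.1 (hvt.congr_of_eventuallyEq hev.symm) i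

theorem second_solution
    (I : Set ℝ) (hIo : IsOpen I) (hIc : I.OrdConnected)
    (φ : ℝ → Matrix (Fin 2) (Fin 2) ℝ)
    (hs : ∀ x ∈ I, (φ x).IsSymm)
    (hi : ∀ i j : Fin 2, LocallyIntegrableOn (fun x => φ x i j) I volume)
    (z : ℝ) (u : ℝ → Fin 2 → ℝ)
    (hu : IsDiracSolution I φ z u) (hunt : ∀ x ∈ I, u x ≠ 0)
    (x₀ : ℝ) (hx₀ : x₀ ∈ I)
    (v : ℝ → Fin 2 → ℝ)
    (hv : ∀ x ∈ I, v x =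
      (2 * ∫ r in x₀..x, ip (u r) ((traceFree φ r).mulVec (u r)) / (ip (u r) (u r)) ^ 2) • u x
      + (ip (u x) (u x))⁻¹ • Jmat.mulVec (u x)) :
    IsDiracSolution I φ z v ∧ ∀ x ∈ I, Wr u v x = 1 := by
  have hucont : ContinuousOn u I := hu.choose_spec.1.1
  have hG := (isPrimitiveOn_integral hx₀ fun c hc x hx =>
    intervalIntegrable_ip_traceFree_mulVec_div hIc hi hucont hunt hc hx).const_mul 2
  have hvG : EqOn v (reductionOfOrder _ u) I := hv
  refine ⟨isDiracSolution_of_eqOn_reductionOfOrder hIo hIc hs hu hunt hG hvG, fun x hx => ?_⟩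
  rw [Wr, hvG hx]
  exact wr_reductionOfOrder _ (hunt x hx)
end

section
/- Let u₀, v₀ : I → ℝ² be continuous, nowhere vanishing, with W_x(u₀, v₀) = 1 for all x ∈ I, and let u₁ : I → ℝ² be continuous and nowhere vanishing. Set R(x) = √(W_x(u₀,u₁)² + W_x(v₀,u₁)²) (which is positive), and let ψ : I → ℝ be a continuous function with W_x(u₀, u₁) = −R(x)·sin ψ(x) and W_x(v₀, u₁) = −R(x)·cos ψ(x) for all x ∈ I. Then ψ is a Prüfer angle for the Wronskian W(u₀, u₁): for every c < d in I, ⌈ψ(d)/π⌉ − ⌊ψ(c)/π⌋ − 1 = #_{(c,d)}(u₀, u₁). -/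
/-!
Write `Δ = θ₁ - θ₀`. In polar coordinates `W(u₀, u₁) = -ρ₀ρ₁ sin Δ`, and where `sin Δ = 0` the
vector `u₁` is the multiple `(ρ₁/ρ₀) cos Δ` of `u₀`, so `W(v₀, u₁) = -(ρ₁/ρ₀) cos Δ` because
`W(u₀, v₀) = 1`. Hence `sin ψ` is a positive multiple of `sin Δ` and, where `sin Δ` vanishes,
`cos ψ` is a positive multiple of `cos Δ`. So `ψ - Δ` never takes an odd multiple of `π`; being
continuous on an interval it stays in one window `((2n-1)π, (2n+1)π)`. Inside that window, equal
signs of `sin ψ` and `sin Δ` force `⌊ψ/π⌋ = ⌊Δ/π⌋ + 2n` and `⌈ψ/π⌉ = ⌈Δ/π⌉ + 2n`, and the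
shifts by `2n` cancel in the count.
-/

open MeasureTheory Real Set

/-- `θ` is a Prüfer angle for the nowhere vanishing continuous function `u` on `I`. -/
def IsPruefer (I : Set ℝ) (u : ℝ → Fin 2 → ℝ) (θ : ℝ → ℝ) : Prop :=
  ContinuousOn θ I ∧
  ∀ x ∈ I, ∃ ρ : ℝ, 0 < ρ ∧ u x 0 = ρ * Real.sin (θ x) ∧ u x 1 = ρ * Real.cos (θ x)

/-- The weighted number of sign flips `#_{(c,d)}(u,v)` computed from Prüfer angles. -/
noncomputable def numFlips (θu θv : ℝ → ℝ) (c d : ℝ) : ℤ :=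
  ⌈(θv d - θu d) / Real.pi⌉ - ⌊(θv c - θu c) / Real.pi⌋ - 1

theorem IsPreconnected.floor_eq {X : Type*} [TopologicalSpace X] {S : Set X} {f : X → ℝ}
    (hS : IsPreconnected S) (hf : ContinuousOn f S) (hZ : ∀ x ∈ S, ∀ k : ℤ, f x ≠ k) {x y : X}
    (hx : x ∈ S) (hy : y ∈ S) : ⌊f x⌋ = ⌊f y⌋ := by
  wlog hxy : ⌊f x⌋ ≤ ⌊f y⌋ generalizing x y
  · exact (this hy hx (le_of_not_ge hxy)).symm
  by_contra hne
  have hlt : (⌊f x⌋ : ℝ) + 1 ≤ ⌊f y⌋ := by exact_mod_cast lt_of_le_of_ne hxy hne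
  have hk : (⌊f y⌋ : ℝ) ∈ Icc (f x) (f y) :=
    ⟨(Int.lt_floor_add_one _).le.trans hlt, Int.floor_le _⟩
  obtain ⟨z, hz, hfz⟩ :=
    (hS.image f hf).ordConnected.out (mem_image_of_mem f hx) (mem_image_of_mem f hy) hk
  exact hZ z hz _ hfz

lemma div_pi_notMem_range_intCast_of_sin_ne_zero {y : ℝ} (hy : sin y ≠ 0) :
    y / π ∉ range ((↑) : ℤ → ℝ) := by
  rintro ⟨m, hm⟩
  exact hy (sin_eq_zero_iff.2 ⟨m, by rw [hm, div_mul_cancel₀ _ pi_ne_zero]⟩)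

lemma ceil_div_pi_eq_floor_add_one {y : ℝ} (hy : sin y ≠ 0) : ⌈y / π⌉ = ⌊y / π⌋ + 1 :=
  (Int.ceil_eq_floor_add_one_iff_notMem _).2 (div_pi_notMem_range_intCast_of_sin_ne_zero hy)

lemma floor_div_pi_mul_pi_lt {y : ℝ} (hy : sin y ≠ 0) :
    ⌊y / π⌋ * π < y ∧ y < (⌊y / π⌋ + 1) * π := by
  have hne : (⌊y / π⌋ : ℝ) ≠ y / π := fun h =>
    div_pi_notMem_range_intCast_of_sin_ne_zero hy ⟨_, h⟩
  exact ⟨(lt_div_iff₀ pi_pos).1 ((Int.floor_le _).lt_of_ne hne),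
    (div_lt_iff₀ pi_pos).1 (Int.lt_floor_add_one _)⟩

lemma sin_pos_iff_even_floor_div_pi {y : ℝ} (hy : sin y ≠ 0) : 0 < sin y ↔ Even ⌊y / π⌋ := by
  obtain ⟨hlo, hhi⟩ := floor_div_pi_mul_pi_lt hy
  have hpos : 0 < sin (y - ⌊y / π⌋ * π) := sin_pos_of_pos_of_lt_pi (by linarith) (by linarith)
  have hsin : sin y = (-1) ^ ⌊y / π⌋ * sin (y - ⌊y / π⌋ * π) := by
    rw [← sin_add_int_mul_pi, sub_add_cancel]
  rcases Int.even_or_odd ⌊y / π⌋ with he | ho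
  · simp only [hsin, he.neg_one_zpow, one_mul, hpos, he]
  · simp only [hsin, ho.neg_one_zpow, neg_one_mul, Left.neg_pos_iff, Int.not_even_iff_odd.2 ho,
      iff_false, not_lt, hpos.le]

lemma floor_ceil_div_pi_eq_of_abs_sub_lt_pi {a b s : ℝ} (hs : 0 < s) (hsin : sin a = s * sin b)
    (hab : |a - b| < π) : ⌊a / π⌋ = ⌊b / π⌋ ∧ ⌈a / π⌉ = ⌈b / π⌉ := by
  obtain ⟨hab₁, hab₂⟩ := abs_lt.1 hab
  by_cases hb : sin b = 0
  · have hsub : sin (a - b) = 0 := by simp [sin_sub, hsin, hb]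
    obtain rfl : a = b := sub_eq_zero.1 ((sin_eq_zero_iff_of_lt_of_lt hab₁ hab₂).1 hsub)
    exact ⟨rfl, rfl⟩
  have ha : sin a ≠ 0 := by rw [hsin]; exact mul_ne_zero hs.ne' hb
  have hpar : Even ⌊a / π⌋ ↔ Even ⌊b / π⌋ := by
    rw [← sin_pos_iff_even_floor_div_pi ha, ← sin_pos_iff_even_floor_div_pi hb, hsin,
      mul_pos_iff_of_pos_left hs]
  obtain ⟨ha₁, ha₂⟩ := floor_div_pi_mul_pi_lt ha
  obtain ⟨hb₁, hb₂⟩ := floor_div_pi_mul_pi_lt hb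
  have hlt₁ : (⌊a / π⌋ : ℝ) < ⌊b / π⌋ + 2 := by nlinarith [pi_pos]
  have hlt₂ : (⌊b / π⌋ : ℝ) < ⌊a / π⌋ + 2 := by nlinarith [pi_pos]
  have hfloor : ⌊a / π⌋ = ⌊b / π⌋ := by
    norm_cast at hlt₁ hlt₂
    rw [Int.even_iff, Int.even_iff] at hpar
    omega
  exact ⟨hfloor, by rw [ceil_div_pi_eq_floor_add_one ha, ceil_div_pi_eq_floor_add_one hb, hfloor]⟩

-- `(a - b + π) / (2π) ∈ ℤ` says that `a - b` is an odd multiple of `π`.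
lemma sub_add_pi_div_two_pi_ne_intCast {a b s : ℝ} (hs : 0 < s) (hsin : sin a = s * sin b)
    (hcos : sin b = 0 → ∃ s' > 0, cos a = s' * cos b) (k : ℤ) :
    (a - b + π) / (2 * π) ≠ k := by
  intro hk
  have ha : a = b - π + k * (2 * π) := by
    rw [div_eq_iff (by positivity)] at hk
    linarith
  have hb : sin b = 0 := by
    have : sin a = -sin b := by rw [ha, sin_add_int_mul_two_pi, sin_sub_pi]
    nlinarith
  obtain ⟨s', hs', hcos'⟩ := hcos hb
  have hcb : cos b = 0 := by
    have : cos a = -cos b := by rw [ha, cos_add_int_mul_two_pi, cos_sub_pi]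
    nlinarith
  simpa [hb, hcb] using sin_sq_add_cos_sq b

lemma floor_ceil_div_pi_eq_add_two_mul {a b s : ℝ} {n : ℤ} (hs : 0 < s)
    (hsin : sin a = s * sin b) (hn : ⌊(a - b + π) / (2 * π)⌋ = n)
    (hodd : ∀ k : ℤ, (a - b + π) / (2 * π) ≠ k) :
    ⌊a / π⌋ = ⌊b / π⌋ + 2 * n ∧ ⌈a / π⌉ = ⌈b / π⌉ + 2 * n := by
  have h2π : (0 : ℝ) < 2 * π := by positivity
  have hlo : n * (2 * π) < a - b + π := by
    refine ((le_div_iff₀ h2π).1 (hn ▸ Int.floor_le _)).lt_of_ne fun h => hodd n ?_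
    rw [← h, mul_div_cancel_right₀ _ h2π.ne']
  have hhi : a - b + π < (n + 1) * (2 * π) := (div_lt_iff₀ h2π).1 (hn ▸ Int.lt_floor_add_one _)
  have hshift : a / π = (a - n * (2 * π)) / π + ((2 * n : ℤ) : ℝ) := by
    field_simp
    push_cast
    ring
  obtain ⟨hfloor, hceil⟩ :=
    floor_ceil_div_pi_eq_of_abs_sub_lt_pi (a := a - n * (2 * π)) (b := b) hs
      (by rw [sin_sub_int_mul_two_pi, hsin]) (abs_lt.2 ⟨by linarith, by linarith⟩)
  rw [hshift, Int.floor_add_intCast, Int.ceil_add_intCast, hfloor, hceil]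
  exact ⟨rfl, rfl⟩

lemma Wr_eq_neg_mul_sin_sub {u v : ℝ → Fin 2 → ℝ} {x ρ σ α β : ℝ}
    (hu₀ : u x 0 = ρ * sin α) (hu₁ : u x 1 = ρ * cos α)
    (hv₀ : v x 0 = σ * sin β) (hv₁ : v x 1 = σ * cos β) :
    Wr u v x = -(ρ * σ) * sin (β - α) := by
  rw [Wr, hu₀, hu₁, hv₀, hv₁, sin_sub]
  ring

lemma Wr_eq_neg_mul_cos_sub_mul_Wr {u v w : ℝ → Fin 2 → ℝ} {x ρ σ α β : ℝ} (hρ : ρ ≠ 0)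
    (hu₀ : u x 0 = ρ * sin α) (hu₁ : u x 1 = ρ * cos α)
    (hw₀ : w x 0 = σ * sin β) (hw₁ : w x 1 = σ * cos β) (hαβ : sin (β - α) = 0) :
    Wr v w x = -(σ / ρ * cos (β - α)) * Wr u v x := by
  have hβ : β = α + (β - α) := by ring
  have hsinβ : sin β = sin α * cos (β - α) := by rw [hβ, sin_add, hαβ, ← hβ]; ring
  have hcosβ : cos β = cos α * cos (β - α) := by rw [hβ, cos_add, hαβ, ← hβ]; ring
  rw [Wr, Wr, hu₀, hu₁, hw₀, hw₁, hsinβ, hcosβ]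
  field_simp
  ring

lemma exists_pos_sin_eq_mul_sin_sub_of_Wr {u₀ u₁ : ℝ → Fin 2 → ℝ} {x R ψ α β : ℝ}
    (hu₀ : ∃ ρ, 0 < ρ ∧ u₀ x 0 = ρ * sin α ∧ u₀ x 1 = ρ * cos α)
    (hu₁ : ∃ ρ, 0 < ρ ∧ u₁ x 0 = ρ * sin β ∧ u₁ x 1 = ρ * cos β) (hR : 0 < R)
    (hψ : Wr u₀ u₁ x = -R * sin ψ) : ∃ s > 0, sin ψ = s * sin (β - α) := by
  obtain ⟨ρ₀, hρ₀, hu₀₀, hu₀₁⟩ := hu₀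
  obtain ⟨ρ₁, hρ₁, hu₁₀, hu₁₁⟩ := hu₁
  refine ⟨ρ₀ * ρ₁ / R, by positivity, ?_⟩
  rw [Wr_eq_neg_mul_sin_sub hu₀₀ hu₀₁ hu₁₀ hu₁₁] at hψ
  field_simp
  linarith

lemma exists_pos_cos_eq_mul_cos_sub_of_Wr {u₀ v₀ u₁ : ℝ → Fin 2 → ℝ} {x R ψ α β : ℝ}
    (hu₀ : ∃ ρ, 0 < ρ ∧ u₀ x 0 = ρ * sin α ∧ u₀ x 1 = ρ * cos α)
    (hu₁ : ∃ ρ, 0 < ρ ∧ u₁ x 0 = ρ * sin β ∧ u₁ x 1 = ρ * cos β) (hW : Wr u₀ v₀ x = 1)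
    (hR : 0 < R) (hψ : Wr v₀ u₁ x = -R * cos ψ) (hαβ : sin (β - α) = 0) :
    ∃ s > 0, cos ψ = s * cos (β - α) := by
  obtain ⟨ρ₀, hρ₀, hu₀₀, hu₀₁⟩ := hu₀
  obtain ⟨ρ₁, hρ₁, hu₁₀, hu₁₁⟩ := hu₁
  refine ⟨ρ₁ / (ρ₀ * R), by positivity, ?_⟩
  rw [Wr_eq_neg_mul_cos_sub_mul_Wr hρ₀.ne' hu₀₀ hu₀₁ hu₁₀ hu₁₁ hαβ, hW] at hψ
  field_simp at hψ ⊢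
  linarith

theorem psi_is_pruefer_angle_for_wronskian_general
    (I : Set ℝ) (hIc : I.OrdConnected)
    (u₀ v₀ u₁ : ℝ → Fin 2 → ℝ)
    (hW : ∀ x ∈ I, Wr u₀ v₀ x = 1)
    (R : ℝ → ℝ)
    (hRpos : ∀ x ∈ I, 0 < R x)
    (ψ : ℝ → ℝ) (hψc : ContinuousOn ψ I)
    (hψ : ∀ x ∈ I, Wr u₀ u₁ x = -R x * Real.sin (ψ x) ∧ Wr v₀ u₁ x = -R x * Real.cos (ψ x)) :
    ∀ c ∈ I, ∀ d ∈ I, c < d →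
      ∀ θ₀ θ₁ : ℝ → ℝ, IsPruefer I u₀ θ₀ → IsPruefer I u₁ θ₁ →
        ⌈ψ d / Real.pi⌉ - ⌊ψ c / Real.pi⌋ - 1 = numFlips θ₀ θ₁ c d := by
  intro c hc d hd _ θ₀ θ₁ h₀ h₁
  have hsin : ∀ x ∈ I, ∃ s > 0, sin (ψ x) = s * sin (θ₁ x - θ₀ x) := fun x hx =>
    exists_pos_sin_eq_mul_sin_sub_of_Wr (h₀.2 x hx) (h₁.2 x hx) (hRpos x hx) (hψ x hx).1
  have hodd : ∀ x ∈ I, ∀ k : ℤ, (ψ x - (θ₁ x - θ₀ x) + π) / (2 * π) ≠ k := fun x hx => by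
    obtain ⟨s, hs, hsx⟩ := hsin x hx
    exact sub_add_pi_div_two_pi_ne_intCast hs hsx
      (exists_pos_cos_eq_mul_cos_sub_of_Wr (h₀.2 x hx) (h₁.2 x hx) (hW x hx) (hRpos x hx)
        (hψ x hx).2)
  have hcont : ContinuousOn (fun x => (ψ x - (θ₁ x - θ₀ x) + π) / (2 * π)) I :=
    ((hψc.sub (h₁.1.sub h₀.1)).add continuousOn_const).div_const _
  have hwind := hIc.isPreconnected.floor_eq hcont hodd hd hc
  obtain ⟨sc, hsc, hsinc⟩ := hsin c hc
  obtain ⟨sd, hsd, hsind⟩ := hsin d hd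
  have hfloor := floor_ceil_div_pi_eq_add_two_mul hsc hsinc rfl (hodd c hc)
  have hceil := floor_ceil_div_pi_eq_add_two_mul hsd hsind hwind (hodd d hd)
  rw [numFlips]
  omega

theorem psi_is_pruefer_angle_for_wronskian
    (I : Set ℝ) (hIc : I.OrdConnected)
    (u₀ v₀ u₁ : ℝ → Fin 2 → ℝ)
    (hu₀c : ContinuousOn u₀ I) (hv₀c : ContinuousOn v₀ I) (hu₁c : ContinuousOn u₁ I)
    (hu₀nt : ∀ x ∈ I, u₀ x ≠ 0) (hv₀nt : ∀ x ∈ I, v₀ x ≠ 0) (hu₁nt : ∀ x ∈ I, u₁ x ≠ 0)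
    (hW : ∀ x ∈ I, Wr u₀ v₀ x = 1)
    (R : ℝ → ℝ) (hR : ∀ x, R x = Real.sqrt (Wr u₀ u₁ x ^ 2 + Wr v₀ u₁ x ^ 2))
    (hRpos : ∀ x ∈ I, 0 < R x)
    (ψ : ℝ → ℝ) (hψc : ContinuousOn ψ I)
    (hψ : ∀ x ∈ I, Wr u₀ u₁ x = -R x * Real.sin (ψ x) ∧ Wr v₀ u₁ x = -R x * Real.cos (ψ x)) :
    ∀ c ∈ I, ∀ d ∈ I, c < d →
      ∀ θ₀ θ₁ : ℝ → ℝ, IsPruefer I u₀ θ₀ → IsPruefer I u₁ θ₁ →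
        ⌈ψ d / Real.pi⌉ - ⌊ψ c / Real.pi⌋ - 1 = numFlips θ₀ θ₁ c d :=
  psi_is_pruefer_angle_for_wronskian_general I hIc u₀ v₀ u₁ hW R hRpos ψ hψc hψ
end

section
/- Let λ ∈ ℝ, let u₀, v₀ be solutions of τ_{φ₀} u = λ u on I with W_x(u₀, v₀) = 1 for all x, and let u₁ be a nontrivial solution of τ_{φ₁} u = λ u on I. Set R(x) = √(W_x(u₀,u₁)² + W_x(v₀,u₁)²) > 0 and let ψ : I → ℝ be locally absolutely continuous with W_x(u₀, u₁) = −R(x)·sin ψ(x) and W_x(v₀, u₁) = −R(x)·cos ψ(x) for all x ∈ I. Then for a.e. x ∈ I, ψ'(x) = −⟨u₀(x)·cos ψ(x) − v₀(x)·sin ψ(x), (φ₁(x) − φ₀(x))·(u₀(x)·cos ψ(x) − v₀(x)·sin ψ(x))⟩. -/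
open MeasureTheory Real Set

/-- A real function `f` is locally absolutely continuous on `I` with a.e. derivative `f'`. -/
def IsACDeriv₁ (I : Set ℝ) (f f' : ℝ → ℝ) : Prop :=
  ContinuousOn f I ∧
  ∀ c ∈ I, ∀ x ∈ I,
    IntervalIntegrable f' volume c x ∧ f x = f c + ∫ t in c..x, f' t

/-!
Write `W_A = W(u₀, u₁)` and `W_B = W(v₀, u₁)`. For solutions of two Dirac equations with the same
`λ` and symmetric `φ₀`, `W(u, v)' = ⟨u, (φ₁ - φ₀) v⟩` a.e. Since `W(u₀, v₀) = 1`, the vector `u₁` equals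
`-W_B u₀ + W_A v₀ = R w` with `w = u₀ cos ψ - v₀ sin ψ`. Differentiating the identity
`W_A cos ψ - W_B sin ψ = 0` eliminates `R'` and gives
`R ψ' = W_B' sin ψ - W_A' cos ψ = -⟨w, (φ₁ - φ₀) u₁⟩ = -R ⟨w, (φ₁ - φ₀) w⟩`.
-/

open Filter Matrix
open scoped Topology

theorem ae_imp_of_forall_mem_nhds {α : Type*} [TopologicalSpace α] [SecondCountableTopology α]
    [MeasurableSpace α] {μ : Measure α} {s : Set α} {P : α → Prop}
    (h : ∀ x ∈ s, ∃ U ∈ 𝓝 x, ∀ᵐ y ∂μ, y ∈ U → P y) : ∀ᵐ y ∂μ, y ∈ s → P y := by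
  refine measure_null_of_locally_null _ fun x hx => ?_
  obtain ⟨U, hU, hPU⟩ := h x (Classical.not_imp.1 hx).1
  exact ⟨_, inter_mem_nhdsWithin _ hU, measure_mono_null
    (fun y hy => Classical.not_imp.2 ⟨hy.2, (Classical.not_imp.1 hy.1).2⟩) (ae_iff.1 hPU)⟩

theorem ae_hasDerivAt_of_eq_add_integral {E : Type*} [NormedAddCommGroup E] [NormedSpace ℝ E]
    [CompleteSpace E] {I : Set ℝ} (hI : IsOpen I) {F f : ℝ → E}
    (h : ∀ c ∈ I, ∀ x ∈ I, IntervalIntegrable f volume c x ∧ F x = F c + ∫ t in c..x, f t) :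
    ∀ᵐ x, x ∈ I → HasDerivAt F (f x) x := by
  refine ae_imp_of_forall_mem_nhds fun x hx => ?_
  obtain ⟨a, b, ⟨hax, hxb⟩, hnhds, hsub⟩ := exists_Icc_mem_subset_of_mem_nhds (hI.mem_nhds hx)
  have haI : a ∈ I := hsub ⟨le_rfl, hax.trans hxb⟩
  have hbI : b ∈ I := hsub ⟨hax.trans hxb, le_rfl⟩
  refine ⟨Ioo a b, interior_Icc (a := a) (b := b) ▸ interior_mem_nhds.2 hnhds, ?_⟩
  filter_upwards [(h a haI b hbI).1.ae_hasDerivAt_integral] with y hy hyab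
  have hF : (fun z => F a + ∫ t in a..z, f t) =ᶠ[𝓝 y] F := by
    filter_upwards [isOpen_Ioo.mem_nhds hyab] with z hz
    exact ((h a haI z (hsub (Ioo_subset_Icc_self hz))).2).symm
  have hyab' : y ∈ uIcc a b := uIcc_of_le (hax.trans hxb) ▸ Ioo_subset_Icc_self hyab
  exact ((hy hyab' a left_mem_uIcc).const_add (F a)).congr_of_eventuallyEq hF.symm

theorem IsACDeriv₁.ae_hasDerivAt {I : Set ℝ} {f f' : ℝ → ℝ} (h : IsACDeriv₁ I f f')
    (hI : IsOpen I) : ∀ᵐ x, x ∈ I → HasDerivAt f (f' x) x :=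
  ae_hasDerivAt_of_eq_add_integral hI h.2

theorem IsACDeriv.ae_hasDerivAt {I : Set ℝ} {u u' : ℝ → Fin 2 → ℝ} (h : IsACDeriv I u u')
    (hI : IsOpen I) : ∀ᵐ x, x ∈ I → HasDerivAt u (u' x) x := by
  have hcomp : ∀ i, ∀ᵐ x, x ∈ I → HasDerivAt (fun y => u y i) (u' x i) x := fun i =>
    ae_hasDerivAt_of_eq_add_integral hI fun c hc x hx => h.2 c hc x hx i
  filter_upwards [ae_all_iff.2 hcomp] with x hx hxI
  exact hasDerivAt_pi.2 fun i => hx i hxI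

theorem Jmat_mulVec (a : Fin 2 → ℝ) : Jmat *ᵥ a = ![-a 1, a 0] := by
  ext i
  fin_cases i <;> simp [Jmat, mulVec, dotProduct, Fin.sum_univ_two]

theorem wr_deriv_eq_ip_of_dirac {A B : Matrix (Fin 2) (Fin 2) ℝ} (hA : A.IsSymm) {lam : ℝ}
    {u v u' v' : Fin 2 → ℝ} (hu : Jmat *ᵥ u' + A *ᵥ u = lam • u)
    (hv : Jmat *ᵥ v' + B *ᵥ v = lam • v) :
    u' 0 * v 1 + u 0 * v' 1 - (u' 1 * v 0 + u 1 * v' 0) = ip u ((B - A) *ᵥ v) := by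
  have hu0 := congrFun hu 0
  have hu1 := congrFun hu 1
  have hv0 := congrFun hv 0
  have hv1 := congrFun hv 1
  have hA10 : A 1 0 = A 0 1 := hA.apply 0 1
  simp only [Jmat_mulVec, mulVec, dotProduct, Fin.sum_univ_two, Pi.add_apply, Pi.smul_apply,
    smul_eq_mul, cons_val_zero, cons_val_one, cons_val_fin_one] at hu0 hu1 hv0 hv1
  simp only [ip, mulVec, dotProduct, Fin.sum_univ_two, Matrix.sub_apply]
  linear_combination
    v 1 * hu1 + v 0 * hu0 - u 1 * hv1 - u 0 * hv0 + (u 1 * v 0 - u 0 * v 1) * hA10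

theorem HasDerivAt.wr {u v : ℝ → Fin 2 → ℝ} {u' v' : Fin 2 → ℝ} {x : ℝ}
    (hu : HasDerivAt u u' x) (hv : HasDerivAt v v' x) :
    HasDerivAt (Wr u v) (u' 0 * v x 1 + u x 0 * v' 1 - (u' 1 * v x 0 + u x 1 * v' 0)) x := by
  have hu_i := hasDerivAt_pi.1 hu
  have hv_i := hasDerivAt_pi.1 hv
  exact ((hu_i 0).mul (hv_i 1)).sub ((hu_i 1).mul (hv_i 0))

theorem IsDiracSolution.ae_hasDerivAt_wr {I : Set ℝ} (hI : IsOpen I)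
    {φ₀ φ₁ : ℝ → Matrix (Fin 2) (Fin 2) ℝ} (hs₀ : ∀ x ∈ I, (φ₀ x).IsSymm) {lam : ℝ}
    {u v : ℝ → Fin 2 → ℝ} (hu : IsDiracSolution I φ₀ lam u) (hv : IsDiracSolution I φ₁ lam v) :
    ∀ᵐ x, x ∈ I → HasDerivAt (Wr u v) (ip (u x) ((φ₁ x - φ₀ x) *ᵥ v x)) x := by
  obtain ⟨u', hu_ac, hu_eq⟩ := hu
  obtain ⟨v', hv_ac, hv_eq⟩ := hv
  filter_upwards [hu_ac.ae_hasDerivAt hI, hv_ac.ae_hasDerivAt hI, hu_eq, hv_eq]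
    with x hu_d hv_d hu_x hv_x hx
  rw [← wr_deriv_eq_ip_of_dirac (hs₀ x hx) (hu_x hx) (hv_x hx)]
  exact (hu_d hx).wr (hv_d hx)

theorem eq_wr_smul_sub_wr_smul {u v w : ℝ → Fin 2 → ℝ} {x : ℝ} (h : Wr u v x = 1) :
    w x = Wr u w x • v x - Wr v w x • u x := by
  simp only [Wr] at h ⊢
  refine funext <| Fin.forall_fin_two.2 ⟨?_, ?_⟩ <;>
    simp only [Pi.sub_apply, Pi.smul_apply, smul_eq_mul] <;> linear_combination (-w x _) * h

theorem mul_deriv_angle_eq_of_polar {f g ψ R : ℝ → ℝ} {f' g' ψ' x : ℝ}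
    (hf : HasDerivAt f f' x) (hg : HasDerivAt g g' x) (hψ : HasDerivAt ψ ψ' x)
    (hpolar : ∀ᶠ y in 𝓝 x, f y = -R y * sin (ψ y) ∧ g y = -R y * cos (ψ y)) :
    R x * ψ' = sin (ψ x) * g' - cos (ψ x) * f' := by
  have hzero : (fun y => cos (ψ y) * f y - sin (ψ y) * g y) =ᶠ[𝓝 x] fun _ => 0 := by
    filter_upwards [hpolar] with y ⟨hfy, hgy⟩
    rw [hfy, hgy]
    ring
  have hderiv := (hψ.cos.mul hf).sub (hψ.sin.mul hg)
  have h0 := hderiv.unique ((hasDerivAt_const x (0 : ℝ)).congr_of_eventuallyEq hzero)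
  obtain ⟨hfx, hgx⟩ := hpolar.self_of_nhds
  rw [hfx, hgx] at h0
  linear_combination h0 - R x * ψ' * sin_sq_add_cos_sq (ψ x)

theorem ip_eq_dotProduct (a b : Fin 2 → ℝ) : ip a b = a ⬝ᵥ b := by
  simp [ip, dotProduct, Fin.sum_univ_two]

theorem pruefer_angle_wronskian_ode_general
    (I : Set ℝ) (hIo : IsOpen I)
    (φ₀ φ₁ : ℝ → Matrix (Fin 2) (Fin 2) ℝ)
    (hs₀ : ∀ x ∈ I, (φ₀ x).IsSymm)
    (lam : ℝ) (u₀ v₀ u₁ : ℝ → Fin 2 → ℝ)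
    (hu₀ : IsDiracSolution I φ₀ lam u₀) (hv₀ : IsDiracSolution I φ₀ lam v₀)
    (hu₁ : IsDiracSolution I φ₁ lam u₁)
    (hW : ∀ x ∈ I, Wr u₀ v₀ x = 1)
    (R : ℝ → ℝ)
    (hRpos : ∀ x ∈ I, 0 < R x)
    (ψ ψ' : ℝ → ℝ) (hψac : IsACDeriv₁ I ψ ψ')
    (hψ : ∀ x ∈ I, Wr u₀ u₁ x = -R x * Real.sin (ψ x) ∧ Wr v₀ u₁ x = -R x * Real.cos (ψ x)) :
    ∀ᵐ x ∂volume, x ∈ I →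
      ψ' x = -ip (fun i => Real.cos (ψ x) * u₀ x i - Real.sin (ψ x) * v₀ x i)
        ((φ₁ x - φ₀ x).mulVec (fun i => Real.cos (ψ x) * u₀ x i - Real.sin (ψ x) * v₀ x i)) := by
  filter_upwards [hu₀.ae_hasDerivAt_wr hIo hs₀ hu₁, hv₀.ae_hasDerivAt_wr hIo hs₀ hu₁,
    hψac.ae_hasDerivAt hIo] with x hA hB hψ' hx
  have hangle := mul_deriv_angle_eq_of_polar (hA hx) (hB hx) (hψ' hx)
    (eventually_of_mem (hIo.mem_nhds hx) hψ)
  set w : Fin 2 → ℝ := cos (ψ x) • u₀ x - sin (ψ x) • v₀ x with hw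
  have hu₁x : u₁ x = R x • w := by
    rw [eq_wr_smul_sub_wr_smul (w := u₁) (hW x hx), (hψ x hx).1, (hψ x hx).2, hw]
    module
  change ψ' x = -ip w ((φ₁ x - φ₀ x) *ᵥ w)
  refine mul_left_cancel₀ (hRpos x hx).ne' ?_
  rw [hangle, hu₁x]
  simp only [ip_eq_dotProduct, mulVec_smul, dotProduct_smul, hw, sub_dotProduct, smul_dotProduct,
    smul_eq_mul]
  ring

theorem pruefer_angle_wronskian_ode
    (I : Set ℝ) (hIo : IsOpen I) (hIc : I.OrdConnected)
    (φ₀ φ₁ : ℝ → Matrix (Fin 2) (Fin 2) ℝ)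
    (hs₀ : ∀ x ∈ I, (φ₀ x).IsSymm) (hs₁ : ∀ x ∈ I, (φ₁ x).IsSymm)
    (hi₀ : ∀ i j : Fin 2, LocallyIntegrableOn (fun x => φ₀ x i j) I volume)
    (hi₁ : ∀ i j : Fin 2, LocallyIntegrableOn (fun x => φ₁ x i j) I volume)
    (lam : ℝ) (u₀ v₀ u₁ : ℝ → Fin 2 → ℝ)
    (hu₀ : IsDiracSolution I φ₀ lam u₀) (hv₀ : IsDiracSolution I φ₀ lam v₀)
    (hu₁ : IsDiracSolution I φ₁ lam u₁) (hu₁nt : ∀ x ∈ I, u₁ x ≠ 0)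
    (hW : ∀ x ∈ I, Wr u₀ v₀ x = 1)
    (R : ℝ → ℝ) (hR : ∀ x, R x = Real.sqrt (Wr u₀ u₁ x ^ 2 + Wr v₀ u₁ x ^ 2))
    (hRpos : ∀ x ∈ I, 0 < R x)
    (ψ ψ' : ℝ → ℝ) (hψac : IsACDeriv₁ I ψ ψ')
    (hψ : ∀ x ∈ I, Wr u₀ u₁ x = -R x * Real.sin (ψ x) ∧ Wr v₀ u₁ x = -R x * Real.cos (ψ x)) :
    ∀ᵐ x ∂volume, x ∈ I →
      ψ' x = -ip (fun i => Real.cos (ψ x) * u₀ x i - Real.sin (ψ x) * v₀ x i)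
        ((φ₁ x - φ₀ x).mulVec (fun i => Real.cos (ψ x) * u₀ x i - Real.sin (ψ x) * v₀ x i)) :=
  pruefer_angle_wronskian_ode_general I hIo φ₀ φ₁ hs₀ lam u₀ v₀ u₁ hu₀ hv₀ hu₁ hW R hRpos ψ ψ' hψac
    hψ
end
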